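/- arXiv:2109.00922 — 4 statements merged into one kernel-verified Lean document; each statement's English description precedes it below -/
import Mathlib

section
/- Let P and Q be probability measures on a measurable space Ω. Then KL(P‖Q) = sup over all bounded measurable functions T : Ω → ℝ of (∫ T dP − log ∫ e^T dQ), where the supremum is taken in the extended reals. (Donsker–Varadhan variational representation of the KL divergence, used in Equation (9) of Theorem 1.) -/
/-!
If `P ≪ Q` and `llr P Q = log (dP/dQ)` is `P`-integrable, the bound
`∫ T dP - log ∫ exp T dQ ≤ ∫ llr P Q dP` is Gibbs' inequality for `P` and the tilted measure
`exp T • Q / ∫ exp T dQ`, and the supremum is approached by `llr P Q` clipped to `[-n, n]`, by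
dominated convergence. When the divergence is infinite the objective is unbounded: if
`Q S = 0 < P S`, take `T = c • 1_S` with `c → ∞`; if `P ≪ Q` but `llr P Q` is not integrable,
its negative part still is (since `x log x ≥ x - 1`), so the truncations `min (max (llr P Q) 0) n`
have unbounded `P`-integrals while `∫ exp T dQ ≤ ∫ (dP/dQ + 1) dQ = 2`.
-/

open MeasureTheory Real
open scoped Classical

noncomputable def klDiv {Ω : Type*} [MeasurableSpace Ω] (P Q : Measure Ω) : EReal :=
  if P ≪ Q ∧ Integrable (llr P Q) P then ((∫ x, llr P Q x ∂P : ℝ) : EReal) else ⊤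

open Filter Topology

lemma abs_max_min_neg_le (y : ℝ) {c : ℝ} (hc : 0 ≤ c) : |max (min y c) (-c)| ≤ |y| := by
  rw [abs_le]; constructor <;> cases abs_cases y <;> grind

lemma max_min_natCast_eventuallyEq (y : ℝ) :
    (fun n : ℕ => max (min y n) (-n)) =ᶠ[atTop] fun _ => y := by
  filter_upwards [eventually_ge_atTop ⌈|y|⌉₊] with n hn
  have := (Nat.le_ceil |y|).trans (Nat.cast_le.2 hn)
  rw [min_eq_left ((le_abs_self y).trans this), max_eq_left (neg_le.1 ((neg_le_abs y).trans this))]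

lemma EReal.iSup_coe_eq_top_of_forall_le {ι : Sort*} {f : ι → ℝ} (h : ∀ M : ℝ, ∃ i, M ≤ f i) :
    ⨆ i, (f i : EReal) = ⊤ := by
  refine iSup_eq_top.2 fun b hb => ?_
  obtain ⟨M, hbM, -⟩ := EReal.exists_between_coe_real hb
  obtain ⟨i, hi⟩ := h M
  exact ⟨i, hbM.trans_le (EReal.coe_le_coe_iff.2 hi)⟩

lemma exists_le_integral_min_of_not_integrable {α : Type*} [MeasurableSpace α] {μ : Measure α}
    [IsFiniteMeasure μ] {g : α → ℝ} (hg : Measurable g) (hg_nonneg : ∀ x, 0 ≤ g x)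
    (hg_int : ¬ Integrable g μ) (M : ℝ) : ∃ n : ℕ, M ≤ ∫ x, min (g x) n ∂μ := by
  by_contra! h
  refine hg_int ((lintegral_ofReal_ne_top_iff_integrable hg.aestronglyMeasurable
    (ae_of_all _ hg_nonneg)).1 (ne_top_of_le_ne_top (ENNReal.ofReal_ne_top (r := M)) ?_))
  have h_sup : ∀ x, ENNReal.ofReal (g x) = ⨆ n : ℕ, ENNReal.ofReal (min (g x) n) := fun x =>
    le_antisymm (le_iSup_of_le ⌈g x⌉₊ (by rw [min_eq_left (Nat.le_ceil _)]))
      (iSup_le fun n => ENNReal.ofReal_le_ofReal (min_le_left _ _))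
  have h_mono : Monotone fun (n : ℕ) x => ENNReal.ofReal (min (g x) n) := fun m n hmn x =>
    ENNReal.ofReal_le_ofReal (min_le_min_left _ (Nat.cast_le.2 hmn))
  simp_rw [h_sup]
  rw [lintegral_iSup (fun n => (hg.min measurable_const).ennreal_ofReal) h_mono]
  refine iSup_le fun n => ?_
  have h_int : Integrable (fun x => min (g x) n) μ :=
    Integrable.of_bound (hg.min measurable_const).aestronglyMeasurable n (ae_of_all _ fun x => by
      rw [norm_of_nonneg (le_min (hg_nonneg x) n.cast_nonneg)]; exact min_le_right _ _)
  rw [← ofReal_integral_eq_lintegral_ofReal h_int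
    (ae_of_all _ fun x => le_min (hg_nonneg x) n.cast_nonneg)]
  exact ENNReal.ofReal_le_ofReal (h n).le

lemma integrable_exp_of_abs_le {α : Type*} [MeasurableSpace α] {μ : Measure α} [IsFiniteMeasure μ]
    {T : α → ℝ} (hT : Measurable T) {C : ℝ} (hC : ∀ x, |T x| ≤ C) :
    Integrable (fun x => exp (T x)) μ := by
  refine Integrable.of_bound hT.exp.aestronglyMeasurable (exp C) (ae_of_all _ fun x => ?_)
  rw [norm_of_nonneg (exp_pos _).le]
  exact exp_le_exp.2 (le_of_abs_le (hC x))

section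

variable {Ω : Type*} [MeasurableSpace Ω] {P Q : Measure Ω}

noncomputable def dvObjective (P Q : Measure Ω) (T : Ω → ℝ) : ℝ :=
  ∫ x, T x ∂P - log (∫ x, exp (T x) ∂Q)

noncomputable def dvSup (P Q : Measure Ω) : EReal :=
  ⨆ T : {T : Ω → ℝ // Measurable T ∧ ∃ C : ℝ, ∀ x, |T x| ≤ C}, (dvObjective P Q T.1 : EReal)

lemma dvObjective_le_dvSup {T : Ω → ℝ} (hT : Measurable T) {C : ℝ} (hC : ∀ x, |T x| ≤ C) :
    (dvObjective P Q T : EReal) ≤ dvSup P Q :=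
  le_iSup_of_le (⟨T, hT, C, hC⟩ : {T : Ω → ℝ // Measurable T ∧ ∃ C : ℝ, ∀ x, |T x| ≤ C}) le_rfl

lemma dvObjective_le_integral_llr [IsProbabilityMeasure P] [IsProbabilityMeasure Q] (hPQ : P ≪ Q)
    (h_int : Integrable (llr P Q) P) {T : Ω → ℝ} (hTP : Integrable T P)
    (hTQ : Integrable (fun x => exp (T x)) Q) :
    dvObjective P Q T ≤ ∫ x, llr P Q x ∂P := by
  have : IsProbabilityMeasure (Q.tilted T) := isProbabilityMeasure_tilted hTQ
  have h_gibbs := InformationTheory.integral_llr_add_sub_measure_univ_nonneg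
    (hPQ.trans (absolutelyContinuous_tilted hTQ)) (integrable_llr_tilted_right hPQ hTP h_int hTQ)
  rw [integral_llr_tilted_right hPQ hTP hTQ h_int] at h_gibbs
  simp only [probReal_univ, add_sub_cancel_right] at h_gibbs
  rw [dvObjective]
  linarith

lemma dvSup_le_integral_llr [IsProbabilityMeasure P] [IsProbabilityMeasure Q] (hPQ : P ≪ Q)
    (h_int : Integrable (llr P Q) P) : dvSup P Q ≤ (∫ x, llr P Q x ∂P : ℝ) := by
  refine iSup_le fun ⟨T, hT, C, hC⟩ => EReal.coe_le_coe_iff.2 ?_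
  exact dvObjective_le_integral_llr hPQ h_int
    (Integrable.of_bound hT.aestronglyMeasurable C (ae_of_all _ hC))
    (integrable_exp_of_abs_le hT hC)

/-- Clipping the density rather than `llr P Q` (which is `log 0 = 0` where the density vanishes)
makes `exp (truncLlr P Q (-n) n)` converge to the density everywhere. -/
noncomputable def truncLlr (P Q : Measure Ω) (a b : ℝ) (x : Ω) : ℝ :=
  log (max (min (P.rnDeriv Q x).toReal (exp b)) (exp a))

lemma measurable_truncLlr (a b : ℝ) : Measurable (truncLlr P Q a b) := by
  unfold truncLlr
  fun_prop

lemma exp_truncLlr (a b : ℝ) (x : Ω) :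
    exp (truncLlr P Q a b x) = max (min (P.rnDeriv Q x).toReal (exp b)) (exp a) :=
  exp_log ((exp_pos a).trans_le (le_max_right _ _))

lemma abs_truncLlr_le {a b : ℝ} (hab : a ≤ b) (x : Ω) : |truncLlr P Q a b x| ≤ max |a| |b| := by
  refine abs_le_max_abs_abs ?_ ?_ <;> rw [← exp_le_exp, exp_truncLlr]
  · exact le_max_right _ _
  · exact max_le (min_le_right _ _) (exp_le_exp.2 hab)

lemma exp_truncLlr_le (a b : ℝ) (x : Ω) :
    exp (truncLlr P Q a b x) ≤ (P.rnDeriv Q x).toReal + exp a := by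
  rw [exp_truncLlr]
  exact max_le (by linarith [min_le_left (P.rnDeriv Q x).toReal (exp b), exp_pos a])
    (by linarith [(P.rnDeriv Q x).toReal_nonneg])

lemma truncLlr_of_pos {x : Ω} (hx : 0 < (P.rnDeriv Q x).toReal) (a b : ℝ) :
    truncLlr P Q a b x = max (min (llr P Q x) b) a := by
  rw [← exp_eq_exp, exp_truncLlr, exp_strictMono.monotone.map_max,
    exp_strictMono.monotone.map_min, llr, exp_log hx]

lemma ae_toReal_rnDeriv_pos [SigmaFinite P] [SigmaFinite Q] (hPQ : P ≪ Q) :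
    ∀ᵐ x ∂P, 0 < (P.rnDeriv Q x).toReal := by
  filter_upwards [Measure.rnDeriv_pos hPQ, hPQ.ae_le (Measure.rnDeriv_lt_top P Q)] with x h0 htop
  exact ENNReal.toReal_pos h0.ne' htop.ne

lemma tendsto_integral_truncLlr [SigmaFinite P] [SigmaFinite Q] (hPQ : P ≪ Q)
    (h_int : Integrable (llr P Q) P) :
    Tendsto (fun n : ℕ => ∫ x, truncLlr P Q (-n) n x ∂P) atTop (𝓝 (∫ x, llr P Q x ∂P)) := by
  refine tendsto_integral_of_dominated_convergence (fun x => |llr P Q x|)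
    (fun n => (measurable_truncLlr _ _).aestronglyMeasurable) h_int.abs (fun n => ?_) ?_
  · filter_upwards [ae_toReal_rnDeriv_pos hPQ] with x hx
    rw [norm_eq_abs, truncLlr_of_pos hx]
    exact abs_max_min_neg_le _ n.cast_nonneg
  · filter_upwards [ae_toReal_rnDeriv_pos hPQ] with x hx
    simp_rw [truncLlr_of_pos hx]
    exact tendsto_const_nhds.congr' (max_min_natCast_eventuallyEq _).symm

lemma tendsto_integral_exp_truncLlr [IsFiniteMeasure P] [IsFiniteMeasure Q] (hPQ : P ≪ Q) :
    Tendsto (fun n : ℕ => ∫ x, exp (truncLlr P Q (-n) n x) ∂Q) atTop (𝓝 (P.real Set.univ)) := by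
  rw [← Measure.integral_toReal_rnDeriv hPQ]
  refine tendsto_integral_of_dominated_convergence (fun x => (P.rnDeriv Q x).toReal + 1)
    (fun n => (measurable_truncLlr _ _).exp.aestronglyMeasurable)
    (Measure.integrable_toReal_rnDeriv.add (integrable_const 1)) (fun n => ae_of_all _ fun x => ?_)
    (ae_of_all _ fun x => ?_)
  · rw [norm_of_nonneg (exp_pos _).le]
    exact (exp_truncLlr_le _ _ x).trans
      (add_le_add_right (exp_le_one_iff.2 (neg_nonpos.2 n.cast_nonneg)) _)
  · have h_exp : Tendsto (fun n : ℕ => exp (n : ℝ)) atTop atTop :=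
      tendsto_exp_atTop.comp tendsto_natCast_atTop_atTop
    have h_exp_neg : Tendsto (fun n : ℕ => exp (-n : ℝ)) atTop (𝓝 0) :=
      tendsto_exp_atBot.comp (tendsto_neg_atTop_atBot.comp tendsto_natCast_atTop_atTop)
    have h_min : (fun n : ℕ => min (P.rnDeriv Q x).toReal (exp n)) =ᶠ[atTop]
        fun _ => (P.rnDeriv Q x).toReal := by
      filter_upwards [h_exp.eventually_ge_atTop (P.rnDeriv Q x).toReal] with n hn
      exact min_eq_left hn
    simp_rw [exp_truncLlr]
    simpa using (tendsto_const_nhds.congr' h_min.symm).max h_exp_neg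

lemma tendsto_dvObjective_truncLlr [IsProbabilityMeasure P] [IsProbabilityMeasure Q] (hPQ : P ≪ Q)
    (h_int : Integrable (llr P Q) P) :
    Tendsto (fun n : ℕ => dvObjective P Q (truncLlr P Q (-n) n)) atTop
      (𝓝 (∫ x, llr P Q x ∂P)) := by
  have h_exp := tendsto_integral_exp_truncLlr (Q := Q) hPQ
  rw [probReal_univ] at h_exp
  simpa [dvObjective] using
    (tendsto_integral_truncLlr hPQ h_int).sub ((continuousAt_log one_ne_zero).tendsto.comp h_exp)

lemma integral_llr_le_dvSup [IsProbabilityMeasure P] [IsProbabilityMeasure Q] (hPQ : P ≪ Q)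
    (h_int : Integrable (llr P Q) P) : ((∫ x, llr P Q x ∂P : ℝ) : EReal) ≤ dvSup P Q :=
  le_of_tendsto' (EReal.tendsto_coe.2 (tendsto_dvObjective_truncLlr hPQ h_int)) fun n =>
    dvObjective_le_dvSup (measurable_truncLlr _ _) (abs_truncLlr_le (neg_le_self n.cast_nonneg))

lemma integrable_min_llr_zero [SigmaFinite P] [IsFiniteMeasure Q] (hPQ : P ≪ Q) :
    Integrable (fun x => min (llr P Q x) 0) P := by
  rw [← integrable_rnDeriv_smul_iff hPQ]
  refine Integrable.of_bound (by unfold llr; fun_prop) 1 (ae_of_all _ fun x => ?_)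
  have h_nonneg := (P.rnDeriv Q x).toReal_nonneg
  rw [smul_eq_mul, mul_min_of_nonneg _ _ h_nonneg, mul_zero, llr, norm_eq_abs, abs_le]
  exact ⟨le_min (by linarith [self_sub_one_le_mul_log h_nonneg]) (by norm_num),
    (min_le_right _ _).trans zero_le_one⟩

lemma dvSup_eq_top_of_not_integrable [IsProbabilityMeasure P] [IsProbabilityMeasure Q]
    (hPQ : P ≪ Q) (h_int : ¬ Integrable (llr P Q) P) : dvSup P Q = ⊤ := by
  have h_pos_int : ¬ Integrable (fun x => max (llr P Q x) 0) P := fun h =>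
    h_int ((h.add (integrable_min_llr_zero hPQ)).congr
      (ae_of_all _ fun x => (max_add_min _ _).trans (add_zero _)))
  refine EReal.iSup_coe_eq_top_of_forall_le fun M => ?_
  obtain ⟨n, hn⟩ := exists_le_integral_min_of_not_integrable
    ((measurable_llr P Q).max measurable_const) (fun x => le_max_right _ _) h_pos_int (M + log 2)
  have h_bdd : ∀ x, |truncLlr P Q 0 n x| ≤ max |0| |(n : ℝ)| := abs_truncLlr_le n.cast_nonneg
  refine ⟨⟨truncLlr P Q 0 n, measurable_truncLlr _ _, _, h_bdd⟩, ?_⟩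
  have h_integral : ∫ x, truncLlr P Q 0 n x ∂P = ∫ x, min (max (llr P Q x) 0) n ∂P := by
    refine integral_congr_ae ?_
    filter_upwards [ae_toReal_rnDeriv_pos hPQ] with x hx
    rw [truncLlr_of_pos hx, max_min_distrib_right, max_eq_left n.cast_nonneg]
  have h_exp_int := integrable_exp_of_abs_le (μ := Q) (measurable_truncLlr _ _) h_bdd
  have h_exp : ∫ x, exp (truncLlr P Q 0 n x) ∂Q ≤ 2 := by
    calc ∫ x, exp (truncLlr P Q 0 n x) ∂Q ≤ ∫ x, ((P.rnDeriv Q x).toReal + exp 0) ∂Q :=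
          integral_mono h_exp_int (Measure.integrable_toReal_rnDeriv.add (integrable_const _))
            fun x => exp_truncLlr_le _ _ x
      _ = 2 := by
          rw [integral_add Measure.integrable_toReal_rnDeriv (integrable_const _),
            Measure.integral_toReal_rnDeriv hPQ]
          norm_num
  have h_log := log_le_log (integral_exp_pos h_exp_int) h_exp
  change M ≤ dvObjective P Q (truncLlr P Q 0 n)
  rw [dvObjective, h_integral]
  linarith

lemma dvObjective_indicator [IsProbabilityMeasure Q] {S : Set Ω} (hS : MeasurableSet S)
    (hQS : Q S = 0) (c : ℝ) : dvObjective P Q (S.indicator fun _ => c) = c * P.real S := by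
  have h_ae : (fun x => exp (S.indicator (fun _ => c) x)) =ᵐ[Q] fun _ => 1 := by
    filter_upwards [measure_eq_zero_iff_ae_notMem.1 hQS] with x hx
    rw [Set.indicator_of_notMem hx, exp_zero]
  rw [dvObjective, integral_indicator_const _ hS, integral_congr_ae h_ae]
  simp [mul_comm]

lemma dvSup_eq_top_of_not_absolutelyContinuous [IsFiniteMeasure P] [IsProbabilityMeasure Q]
    (hPQ : ¬ P ≪ Q) : dvSup P Q = ⊤ := by
  obtain ⟨S, hS, hQS, hPS⟩ : ∃ S, MeasurableSet S ∧ Q S = 0 ∧ P S ≠ 0 := by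
    by_contra! h
    exact hPQ (Measure.AbsolutelyContinuous.mk h)
  refine EReal.iSup_coe_eq_top_of_forall_le fun M =>
    ⟨⟨S.indicator fun _ => M / P.real S, measurable_const.indicator hS, |M / P.real S|,
      fun x => ?_⟩, ?_⟩
  · by_cases hx : x ∈ S <;> simp [hx]
  · change M ≤ dvObjective P Q (S.indicator fun _ => M / P.real S)
    rw [dvObjective_indicator hS hQS,
      div_mul_cancel₀ _ ((measureReal_ne_zero_iff (measure_ne_top P S)).2 hPS)]

end

/-- Donsker–Varadhan variational representation: `KL(P‖Q)` equals the supremum over all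
bounded measurable `T : Ω → ℝ` of `∫ T dP − log ∫ e^T dQ`, in the extended reals. -/
theorem donsker_varadhan_representation {Ω : Type*} [MeasurableSpace Ω]
    (P Q : Measure Ω) [IsProbabilityMeasure P] [IsProbabilityMeasure Q] :
    klDiv P Q = ⨆ T : {T : Ω → ℝ // Measurable T ∧ ∃ C : ℝ, ∀ x, |T x| ≤ C},
      ((∫ x, T.1 x ∂P - Real.log (∫ x, Real.exp (T.1 x) ∂Q) : ℝ) : EReal) := by
  change klDiv P Q = dvSup P Q
  by_cases hPQ : P ≪ Q
  · by_cases h_int : Integrable (llr P Q) P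
    · rw [klDiv, if_pos ⟨hPQ, h_int⟩]
      exact le_antisymm (integral_llr_le_dvSup hPQ h_int) (dvSup_le_integral_llr hPQ h_int)
    · rw [klDiv, if_neg fun h => h_int h.2, dvSup_eq_top_of_not_integrable hPQ h_int]
  · rw [klDiv, if_neg fun h => hPQ h.1, dvSup_eq_top_of_not_absolutelyContinuous hPQ]
end

section
/- Let P and Q be probability measures on a measurable space Ω such that P is not absolutely continuous with respect to Q. Then the supremum over all bounded measurable functions T : Ω → ℝ of (∫ T dP − log ∫ e^T dQ) equals ∞. -/
open MeasureTheory Real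
open scoped Classical

/-!
Take a measurable set `A` with `Q A = 0 < P A` and test functions `T = c · 𝟙_A`. Since `T = 0`
`Q`-a.e., the term `log ∫ e^T dQ` vanishes, while `∫ T dP = c · P A` grows without bound in `c`.
-/

lemma MeasureTheory.Measure.exists_measurableSet_null_ne_zero_of_not_absolutelyContinuous
    {Ω : Type*} [MeasurableSpace Ω] {μ ν : Measure Ω} (h : ¬ μ ≪ ν) :
    ∃ s, MeasurableSet s ∧ ν s = 0 ∧ μ s ≠ 0 := by
  contrapose! h
  exact Measure.AbsolutelyContinuous.mk h

lemma EReal.iSup_coe_eq_top {ι : Sort*} {f : ι → ℝ} (hf : ¬ BddAbove (Set.range f)) :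
    ⨆ i, (f i : EReal) = ⊤ := by
  refine iSup_eq_top.2 fun b hb => ?_
  obtain ⟨_, ⟨i, rfl⟩, hi⟩ := not_bddAbove_iff.1 hf b.toReal
  refine ⟨i, ?_⟩
  induction b with
  | bot => exact EReal.bot_lt_coe _
  | coe b => exact EReal.coe_lt_coe_iff.2 hi
  | top => exact absurd hb (lt_irrefl _)

lemma integral_sub_log_integral_exp_indicator_of_measure_zero {Ω : Type*} [MeasurableSpace Ω]
    {P Q : Measure Ω} [IsProbabilityMeasure Q] {s : Set Ω} (hs : MeasurableSet s)
    (hQs : Q s = 0) (c : ℝ) :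
    ∫ x, s.indicator (fun _ => c) x ∂P - log (∫ x, exp (s.indicator (fun _ => c) x) ∂Q)
      = P.real s * c := by
  have hexp : (fun x => exp (s.indicator (fun _ => c) x)) =ᵐ[Q] fun _ => 1 := by
    filter_upwards [indicator_meas_zero (f := fun _ => c) hQs] with x hx
    simp [hx]
  rw [integral_indicator_const c hs, integral_congr_ae hexp]
  simp

/-- If `P` is not absolutely continuous with respect to `Q`, the Donsker–Varadhan supremum
over bounded measurable functions equals `∞`. -/
theorem donsker_varadhan_sup_eq_top_of_not_ac {Ω : Type*} [MeasurableSpace Ω]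
    (P Q : Measure Ω) [IsProbabilityMeasure P] [IsProbabilityMeasure Q]
    (h : ¬ P ≪ Q) :
    (⨆ T : {T : Ω → ℝ // Measurable T ∧ ∃ C : ℝ, ∀ x, |T x| ≤ C},
      ((∫ x, T.1 x ∂P - Real.log (∫ x, Real.exp (T.1 x) ∂Q) : ℝ) : EReal)) = ⊤ := by
  obtain ⟨A, hA, hQA, hPA⟩ :=
    Measure.exists_measurableSet_null_ne_zero_of_not_absolutelyContinuous h
  have hp : 0 < P.real A := ENNReal.toReal_pos hPA (measure_ne_top P A)
  refine EReal.iSup_coe_eq_top (not_bddAbove_iff.2 fun b => ?_)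
  let c := (b + 1) / P.real A
  let T : {T : Ω → ℝ // Measurable T ∧ ∃ C : ℝ, ∀ x, |T x| ≤ C} :=
    ⟨A.indicator fun _ => c, measurable_const.indicator hA, |c|,
      fun x => by simpa using norm_indicator_le_norm_self (fun _ => c) x⟩
  refine ⟨_, ⟨T, rfl⟩, ?_⟩
  dsimp only [T]
  rw [integral_sub_log_integral_exp_indicator_of_measure_zero hA hQA, mul_div_cancel₀ _ hp.ne']
  exact lt_add_one b
end

section
/- Let Q be a probability measure on a measurable space Ω and let T : Ω → ℝ be a bounded measurable function. Then log ∫ e^T dQ = sup over all probability measures P on Ω with P ≪ Q of (∫ T dP − KL(P‖Q)), and the supremum is attained by the Gibbs measure P* with dP*/dQ = e^T / ∫ e^T dQ. (Gibbs variational principle, the dual form of the Donsker–Varadhan representation.) -/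
open MeasureTheory Real
open scoped Classical

/-!
Tilting `Q` by `e^T` changes log-likelihood ratios by `T - log ∫ e^T dQ`, so for every `P ≪ Q`
`∫ T dP - KL(P‖Q) = log ∫ e^T dQ - KL(P‖Q.tilted T)`.
Gibbs' inequality `KL ≥ 0` bounds the left side by `log ∫ e^T dQ`, with equality at
`P = Q.tilted T`, where the remaining divergence vanishes.
-/

lemma EReal.sub_le_self_of_nonneg {x y : EReal} (hy : 0 ≤ y) : x - y ≤ x := by
  rw [sub_eq_add_neg]
  exact add_le_of_nonpos_right ((EReal.neg_le_neg_iff.mpr hy).trans_eq neg_zero)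

section KLDivergence

variable {Ω : Type*} [MeasurableSpace Ω]

lemma integrable_of_abs_le (μ : Measure Ω) [IsFiniteMeasure μ] {f : Ω → ℝ} (hf : Measurable f)
    {C : ℝ} (hC : ∀ x, |f x| ≤ C) : Integrable f μ :=
  .of_bound hf.aestronglyMeasurable C (.of_forall hC)

lemma klDiv_nonneg (P Q : Measure Ω) [IsProbabilityMeasure P] [IsProbabilityMeasure Q] :
    0 ≤ klDiv P Q := by
  unfold klDiv
  split_ifs with h
  · have h_gibbs := InformationTheory.integral_llr_add_sub_measure_univ_nonneg h.1 h.2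
    simp only [probReal_univ, add_sub_cancel_right] at h_gibbs
    exact EReal.coe_nonneg.mpr h_gibbs
  · exact le_top

lemma klDiv_self (P : Measure Ω) [SigmaFinite P] : klDiv P P = 0 := by
  have h_zero := llr_self P
  rw [klDiv, if_pos ⟨Measure.AbsolutelyContinuous.rfl, (integrable_zero _ _ _).congr h_zero.symm⟩,
    integral_congr_ae h_zero]
  simp

lemma integrable_llr_tilted_right_iff {P Q : Measure Ω} [IsFiniteMeasure P] [SigmaFinite Q]
    {T : Ω → ℝ} (hPQ : P ≪ Q) (hTP : Integrable T P) (hexp : Integrable (fun x ↦ exp (T x)) Q) :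
    Integrable (llr P (Q.tilted T)) P ↔ Integrable (llr P Q) P := by
  refine ⟨fun h ↦ ?_, fun h ↦ integrable_llr_tilted_right hPQ hTP h hexp⟩
  refine (h.sub (hTP.neg.add (integrable_const (log (∫ x, exp (T x) ∂Q))))).congr ?_
  filter_upwards [llr_tilted_right hPQ hexp] with x hx
  simp [hx]

theorem integral_sub_klDiv_eq_log_integral_exp_sub_klDiv_tilted {P Q : Measure Ω}
    [IsProbabilityMeasure P] [SigmaFinite Q] {T : Ω → ℝ} (hPQ : P ≪ Q) (hTP : Integrable T P)
    (hexp : Integrable (fun x ↦ exp (T x)) Q) :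
    ((∫ x, T x ∂P : ℝ) : EReal) - klDiv P Q
      = ((log (∫ x, exp (T x) ∂Q) : ℝ) : EReal) - klDiv P (Q.tilted T) := by
  have hP_tilted : P ≪ Q.tilted T := hPQ.trans (absolutelyContinuous_tilted hexp)
  by_cases h_int : Integrable (llr P Q) P
  · have h_int_tilted := (integrable_llr_tilted_right_iff hPQ hTP hexp).mpr h_int
    rw [klDiv, klDiv, if_pos ⟨hPQ, h_int⟩, if_pos ⟨hP_tilted, h_int_tilted⟩,
      integral_llr_tilted_right hPQ hTP hexp h_int, ← EReal.coe_sub, ← EReal.coe_sub]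
    congr 1
    ring
  · have h_not_int_tilted := mt (integrable_llr_tilted_right_iff hPQ hTP hexp).mp h_int
    rw [klDiv, klDiv, if_neg (fun h ↦ h_int h.2), if_neg (fun h ↦ h_not_int_tilted h.2),
      EReal.sub_top, EReal.sub_top]

end KLDivergence

/-- Gibbs variational principle: for a probability measure `Q` and bounded measurable `T`,
`log ∫ e^T dQ` is the supremum over probability measures `P ≪ Q` of `∫ T dP − KL(P‖Q)`
(read in the extended reals), and the supremum is attained by the Gibbs measure
`P* = Q.tilted T`, i.e. `dP*/dQ = e^T / ∫ e^T dQ`. -/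
theorem gibbs_variational_principle {Ω : Type*} [MeasurableSpace Ω]
    (Q : Measure Ω) [IsProbabilityMeasure Q]
    (T : Ω → ℝ) (hT : Measurable T) (hTbdd : ∃ C : ℝ, ∀ x, |T x| ≤ C) :
    ((Real.log (∫ x, Real.exp (T x) ∂Q) : ℝ) : EReal)
        = ⨆ P : {P : Measure Ω // IsProbabilityMeasure P ∧ P ≪ Q},
            (((∫ x, T x ∂P.1 : ℝ) : EReal) - klDiv P.1 Q) ∧
      (((∫ x, T x ∂(Q.tilted T) : ℝ) : EReal) - klDiv (Q.tilted T) Q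
        = ((Real.log (∫ x, Real.exp (T x) ∂Q) : ℝ) : EReal)) := by
  obtain ⟨C, hC⟩ := hTbdd
  have hexp : Integrable (fun x ↦ exp (T x)) Q :=
    integrable_of_abs_le Q hT.exp fun x ↦ by
      rw [abs_of_pos (exp_pos _)]
      exact exp_le_exp.mpr (abs_le.mp (hC x)).2
  have hPstar : IsProbabilityMeasure (Q.tilted T) := isProbabilityMeasure_tilted hexp
  have attained : ((∫ x, T x ∂(Q.tilted T) : ℝ) : EReal) - klDiv (Q.tilted T) Q
      = ((log (∫ x, exp (T x) ∂Q) : ℝ) : EReal) := by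
    rw [integral_sub_klDiv_eq_log_integral_exp_sub_klDiv_tilted (tilted_absolutelyContinuous Q T)
      (integrable_of_abs_le _ hT hC) hexp, klDiv_self, sub_zero]
  refine ⟨le_antisymm ?_ ?_, attained⟩
  · exact le_iSup_of_le ⟨Q.tilted T, hPstar, tilted_absolutelyContinuous Q T⟩ attained.ge
  · refine iSup_le fun ⟨P, hP, hPQ⟩ ↦ ?_
    rw [integral_sub_klDiv_eq_log_integral_exp_sub_klDiv_tilted hPQ
      (integrable_of_abs_le _ hT hC) hexp]
    exact EReal.sub_le_self_of_nonneg (klDiv_nonneg P (Q.tilted T))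
end

section
/- Let P and Q be probability measures on a measurable space Ω and let T : Ω → ℝ be a measurable function such that T is P-integrable and e^{T−1} is Q-integrable. Then ∫ T dP − ∫ e^{T−1} dQ ≤ KL(P‖Q). (Nguyen–Wainwright–Jordan f-divergence lower bound for the KL divergence, the bound underlying Equation (10) of Theorem 1.) -/
open MeasureTheory Real
open scoped Classical

/-! The convex conjugate of `u ↦ u log u` is `t ↦ e^{t-1}`, so Fenchel–Young gives
`u t - e^{t-1} ≤ u log u` for `u ≥ 0`. Taking `u = dP/dQ` and integrating against `Q` turns
the left side into `∫ T dP - ∫ e^{T-1} dQ` and the right side into `∫ log (dP/dQ) dP`. -/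

lemma mul_sub_exp_sub_one_le_mul_log {u : ℝ} (hu : 0 ≤ u) (t : ℝ) :
    u * t - exp (t - 1) ≤ u * log u := by
  rcases hu.eq_or_lt with rfl | hu
  · simpa using (exp_pos (t - 1)).le
  · have h_tangent : t - log u ≤ exp (t - log u - 1) := by
      linarith [add_one_le_exp (t - log u - 1)]
    have h_rescale : u * exp (t - log u - 1) = exp (t - 1) := by
      rw [show t - log u - 1 = (t - 1) - log u by ring, exp_sub, exp_log hu]
      field_simp
    nlinarith [mul_le_mul_of_nonneg_left h_tangent hu.le]

theorem integral_sub_integral_exp_sub_one_le_integral_llr {α : Type*} [MeasurableSpace α]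
    {μ ν : Measure α} [Measure.HaveLebesgueDecomposition μ ν] [SigmaFinite μ] (hμν : μ ≪ ν)
    {f : α → ℝ} (hfμ : Integrable f μ) (hfν : Integrable (fun x ↦ exp (f x - 1)) ν)
    (h_int : Integrable (llr μ ν) μ) :
    ∫ x, f x ∂μ - ∫ x, exp (f x - 1) ∂ν ≤ ∫ x, llr μ ν x ∂μ := by
  have hfμ' := (integrable_toReal_rnDeriv_mul_iff hμν).mpr hfμ
  have h_int' := (integrable_toReal_rnDeriv_mul_iff hμν).mpr h_int
  rw [← integral_toReal_rnDeriv_mul hμν, ← integral_toReal_rnDeriv_mul hμν,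
    ← integral_sub hfμ' hfν]
  exact integral_mono (hfμ'.sub hfν) h_int' fun x ↦
    mul_sub_exp_sub_one_le_mul_log ENNReal.toReal_nonneg (f x)

theorem nwj_lower_bound_general {Ω : Type*} [MeasurableSpace Ω]
    (P Q : Measure Ω) [IsProbabilityMeasure P] [IsProbabilityMeasure Q]
    (T : Ω → ℝ) (hTP : Integrable T P)
    (hTQ : Integrable (fun x => Real.exp (T x - 1)) Q) :
    ((∫ x, T x ∂P - ∫ x, Real.exp (T x - 1) ∂Q : ℝ) : EReal) ≤ klDiv P Q := by
  unfold klDiv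
  split_ifs with h
  · exact EReal.coe_le_coe_iff.mpr
      (integral_sub_integral_exp_sub_one_le_integral_llr h.1 hTP hTQ h.2)
  · exact le_top

/-- Nguyen–Wainwright–Jordan f-divergence lower bound for the KL divergence: if `T` is
measurable, `P`-integrable and `e^{T−1}` is `Q`-integrable, then
`∫ T dP − ∫ e^{T−1} dQ ≤ KL(P‖Q)` in the extended reals. -/
theorem nwj_lower_bound {Ω : Type*} [MeasurableSpace Ω]
    (P Q : Measure Ω) [IsProbabilityMeasure P] [IsProbabilityMeasure Q]
    (T : Ω → ℝ) (hT : Measurable T) (hTP : Integrable T P)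
    (hTQ : Integrable (fun x => Real.exp (T x - 1)) Q) :
    ((∫ x, T x ∂P - ∫ x, Real.exp (T x - 1) ∂Q : ℝ) : EReal) ≤ klDiv P Q :=
  nwj_lower_bound_general P Q T hTP hTQ
end
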